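/- Let {B_α} be a family of open balls in R^{N−1}_∞, corresponding to half-spaces Σ_α = {x ∈ H^N : ⟨x, v_α⟩ > 0} with space-like unit normals v_α. Then the boundary spheres ∂B_α have empty common intersection if and only if the subspace of R^{N+1} spanned by the v_α is either time-like or N-dimensional and space-like. -/

import Mathlib

/-!
A common ideal point is a nonzero null vector of `V^⊥`, where `V` is the span of the `v α`.
If `V` contains a time-like vector, `V^⊥` is space-like by the reverse Cauchy–Schwarz
inequality. If `V` is positive semidefinite but degenerate, a null vector of `V` is orthogonal
to `V` by Cauchy–Schwarz. If `V` is space-like, the whole space is `V ⊕ V^⊥` and `V^⊥` contains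
the time-like part of the time axis; it then contains a null vector exactly when its dimension
`N + 1 - dim V` is at least two, while for `dim V = N` it is a time-like line.
-/

/-- The Lorentz inner product on ℝ^{N+1}. -/
def lorentz {N : ℕ} (x y : Fin (N + 1) → ℝ) : ℝ :=
  (∑ i : Fin N, x i.castSucc * y i.castSucc) - x (Fin.last N) * y (Fin.last N)

/-- A subspace is time-like if it contains a time-like vector. -/
def IsTimelikeSub {N : ℕ} (V : Submodule ℝ (Fin (N + 1) → ℝ)) : Prop :=
  ∃ x ∈ V, lorentz x x < 0

/-- A subspace is space-like if every non-zero element is space-like. -/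
def IsSpacelikeSub {N : ℕ} (V : Submodule ℝ (Fin (N + 1) → ℝ)) : Prop :=
  ∀ x ∈ V, x ≠ 0 → 0 < lorentz x x

namespace LinearMap.BilinForm

variable {K V : Type*} [Field K] [AddCommGroup V] [Module K V]

theorem mem_orthogonal_of_nonneg_of_apply_self_eq_zero [LinearOrder K] [IsStrictOrderedRing K]
    {B : LinearMap.BilinForm K V} (hB : B.IsSymm)
    {W : Submodule K V} (hW : ∀ x ∈ W, 0 ≤ B x x) {x : V} (hx : x ∈ W) (hxx : B x x = 0) :
    x ∈ B.orthogonal W := by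
  have hker : (⟨x, hx⟩ : W) ∈ LinearMap.ker (B.restrict W) :=
    ((B.restrict W).apply_apply_same_eq_zero_iff (fun y => hW y y.2)
      (isSymm_iff.mp (hB.restrict W))).mp hxx
  intro y hy
  rw [hB.eq]
  exact LinearMap.congr_fun (LinearMap.mem_ker.mp hker) ⟨y, hy⟩

variable [FiniteDimensional K V] {B : LinearMap.BilinForm K V} {W : Submodule K V}

theorem isCompl_orthogonal_of_anisotropic (hB : B.IsRefl)
    (hW : ∀ x ∈ W, B x x = 0 → x = 0) : IsCompl W (B.orthogonal W) :=
  (isCompl_orthogonal_iff_disjoint hB).mpr <| Submodule.disjoint_def.mpr fun x hxW hxW' =>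
    hW x hxW (hxW' x hxW)

/-- In codimension one, the orthogonal complement of an anisotropic subspace is a line; a null
vector spanning it would be orthogonal to itself and to `W`, hence lie in `W`. -/
theorem eq_zero_of_mem_orthogonal_of_finrank_add_one (hB : B.Nondegenerate) (hB' : B.IsRefl)
    (hW : ∀ x ∈ W, B x x = 0 → x = 0) (hrank : Module.finrank K W + 1 = Module.finrank K V)
    {u : V} (hu : u ∈ B.orthogonal W) (huu : B u u = 0) : u = 0 := by
  by_contra hu0
  have hline : K ∙ u = B.orthogonal W := by
    refine Submodule.eq_of_le_of_finrank_eq ((Submodule.span_singleton_le_iff_mem _ _).mpr hu) ?_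
    rw [finrank_span_singleton hu0, finrank_orthogonal hB]
    omega
  have huW : u ∈ B.orthogonal (B.orthogonal W) := by
    rw [← hline]
    intro n hn
    obtain ⟨c, rfl⟩ := Submodule.mem_span_singleton.mp hn
    simp [huu]
  rw [orthogonal_orthogonal hB hB'] at huW
  exact hu0 (hW u huW huu)

end LinearMap.BilinForm

open LinearMap.BilinForm Module

section Lorentz

variable {N : ℕ}

theorem lorentz_comm (x y : Fin (N + 1) → ℝ) : lorentz x y = lorentz y x := by
  simp only [lorentz, mul_comm]

theorem lorentz_add_left (x y z : Fin (N + 1) → ℝ) :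
    lorentz (x + y) z = lorentz x z + lorentz y z := by
  simp only [lorentz, Pi.add_apply, add_mul, Finset.sum_add_distrib]
  ring

theorem lorentz_smul_left (c : ℝ) (x y : Fin (N + 1) → ℝ) :
    lorentz (c • x) y = c * lorentz x y := by
  simp only [lorentz, Pi.smul_apply, smul_eq_mul, mul_sub, Finset.mul_sum, mul_assoc]

theorem lorentz_zero_left (y : Fin (N + 1) → ℝ) : lorentz 0 y = 0 := by
  simp [lorentz]

theorem lorentz_sub_left (x y z : Fin (N + 1) → ℝ) :
    lorentz (x - y) z = lorentz x z - lorentz y z := by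
  simp only [lorentz, Pi.sub_apply, sub_mul, Finset.sum_sub_distrib]
  ring

theorem lorentz_add_right (x y z : Fin (N + 1) → ℝ) :
    lorentz x (y + z) = lorentz x y + lorentz x z := by
  rw [lorentz_comm, lorentz_add_left, lorentz_comm y, lorentz_comm z]

theorem lorentz_smul_right (c : ℝ) (x y : Fin (N + 1) → ℝ) :
    lorentz x (c • y) = c * lorentz x y := by
  rw [lorentz_comm, lorentz_smul_left, lorentz_comm]

variable (N) in
def lorentzForm : LinearMap.BilinForm ℝ (Fin (N + 1) → ℝ) :=
  LinearMap.mk₂ ℝ lorentz lorentz_add_left lorentz_smul_left lorentz_add_right lorentz_smul_right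

@[simp]
theorem lorentzForm_apply (x y : Fin (N + 1) → ℝ) : lorentzForm N x y = lorentz x y := rfl

theorem lorentzForm_isSymm : (lorentzForm N).IsSymm := ⟨lorentz_comm⟩

theorem lorentz_single_castSucc (u : Fin (N + 1) → ℝ) (i : Fin N) :
    lorentz u (Pi.single i.castSucc 1) = u i.castSucc := by
  simp [lorentz, Pi.single_apply, Fin.castSucc_inj, (Fin.castSucc_lt_last i).ne']

theorem lorentz_single_last (u : Fin (N + 1) → ℝ) :
    lorentz u (Pi.single (Fin.last N) 1) = -u (Fin.last N) := by
  simp [lorentz, (Fin.castSucc_lt_last _).ne]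

theorem lorentzForm_nondegenerate : (lorentzForm N).Nondegenerate := by
  refine lorentzForm_isSymm.isRefl.nondegenerate_iff_separatingLeft.mpr fun u hu => ?_
  funext j
  induction j using Fin.lastCases with
  | last => simpa [lorentz_single_last] using hu (Pi.single (Fin.last N) 1)
  | cast i => simpa [lorentz_single_castSucc] using hu (Pi.single i.castSucc 1)

theorem mem_orthogonal_span_range_iff {A : Type*} (v : A → Fin (N + 1) → ℝ)
    (u : Fin (N + 1) → ℝ) :
    u ∈ (lorentzForm N).orthogonal (Submodule.span ℝ (Set.range v)) ↔
      ∀ α, lorentz u (v α) = 0 := by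
  have : u ∈ (lorentzForm N).orthogonal (Submodule.span ℝ (Set.range v)) ↔
      Submodule.span ℝ (Set.range v) ≤ LinearMap.ker (lorentzForm N u) := by
    simp only [mem_orthogonal_iff, SetLike.le_def, LinearMap.mem_ker, lorentzForm_apply,
      lorentz_comm _ u]
  rw [this, Submodule.span_le, Set.range_subset_iff]
  rfl

/-- Reverse Cauchy–Schwarz: writing `x = (x', x₀)`, `t = (t', t₀)`, orthogonality gives
`x₀ t₀ = x'·t'`, so `x₀² t₀² ≤ |x'|² |t'|² < |x'|² t₀²` unless `x' = 0`, which forces `x = 0`. -/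
theorem lorentz_self_pos_of_orthogonal_timelike {t x : Fin (N + 1) → ℝ} (ht : lorentz t t < 0)
    (hxt : lorentz x t = 0) (hx : x ≠ 0) : 0 < lorentz x x := by
  set a := ∑ i : Fin N, x i.castSucc ^ 2
  set b := ∑ i : Fin N, t i.castSucc ^ 2
  set c := ∑ i : Fin N, x i.castSucc * t i.castSucc
  have hCS : c ^ 2 ≤ a * b := Finset.sum_mul_sq_le_sq_mul_sq _ _ _
  have hxx : lorentz x x = a - x (Fin.last N) ^ 2 := by simp only [lorentz, sq, a]
  have htt : lorentz t t = b - t (Fin.last N) ^ 2 := by simp only [lorentz, sq, b]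
  have hc : c = x (Fin.last N) * t (Fin.last N) := by simp only [lorentz] at hxt; linarith
  have hb : 0 ≤ b := Finset.sum_nonneg fun i _ => sq_nonneg _
  have ha : 0 < a := by
    refine (Finset.sum_nonneg fun i _ => sq_nonneg _).lt_of_ne' fun ha => hx ?_
    have hspatial (i : Fin N) : x i.castSucc = 0 :=
      pow_eq_zero_iff two_ne_zero |>.mp <|
        (Finset.sum_eq_zero_iff_of_nonneg fun i _ => sq_nonneg _).mp ha i (Finset.mem_univ i)
    have hlast : x (Fin.last N) = 0 := by
      have htl : t (Fin.last N) ≠ 0 := by rintro h; nlinarith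
      have : c = 0 := Finset.sum_eq_zero fun i _ => by rw [hspatial, zero_mul]
      exact (mul_eq_zero.mp (hc ▸ this)).resolve_right htl
    funext j
    induction j using Fin.lastCases with
    | last => exact hlast
    | cast i => exact hspatial i
  have hlt : x (Fin.last N) ^ 2 * t (Fin.last N) ^ 2 < a * t (Fin.last N) ^ 2 :=
    calc x (Fin.last N) ^ 2 * t (Fin.last N) ^ 2 = c ^ 2 := by rw [hc]; ring
      _ ≤ a * b := hCS
      _ < a * t (Fin.last N) ^ 2 := mul_lt_mul_of_pos_left (by linarith) ha
  rw [hxx]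
  exact sub_pos.mpr (lt_of_mul_lt_mul_right hlt (sq_nonneg _))

/-- Projecting a second vector of `W` onto `t^⊥` gives a space-like `s'`, and `t + k s'` is null
for `k² = -⟨t,t⟩ / ⟨s',s'⟩`. -/
theorem exists_null_of_timelike_of_two_le_finrank {W : Submodule ℝ (Fin (N + 1) → ℝ)}
    (hW : 2 ≤ finrank ℝ W) {t : Fin (N + 1) → ℝ} (htW : t ∈ W) (ht : lorentz t t < 0) :
    ∃ u ∈ W, u ≠ 0 ∧ lorentz u u = 0 := by
  obtain ⟨s, hsW, hst⟩ : ∃ s ∈ W, s ∉ ℝ ∙ t := SetLike.not_le_iff_exists.mp fun hle => by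
    have ht0 : t ≠ 0 := by rintro rfl; simp [lorentz_zero_left] at ht
    have := Submodule.finrank_mono hle
    rw [finrank_span_singleton ht0] at this
    omega
  set s' := s - (lorentz s t / lorentz t t) • t
  have hs'W : s' ∈ W := W.sub_mem hsW (W.smul_mem _ htW)
  have hs't : lorentz s' t = 0 := by
    rw [lorentz_sub_left, lorentz_smul_left, div_mul_cancel₀ _ ht.ne, sub_self]
  have hs'0 : s' ≠ 0 := fun h => hst <| by
    rw [sub_eq_zero.mp h]
    exact Submodule.smul_mem _ _ (Submodule.mem_span_singleton_self t)
  have hs's' := lorentz_self_pos_of_orthogonal_timelike ht hs't hs'0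
  set k := √(-lorentz t t / lorentz s' s')
  have hk : k ^ 2 * lorentz s' s' = -lorentz t t := by
    rw [Real.sq_sqrt (div_nonneg (neg_nonneg.mpr ht.le) hs's'.le), div_mul_cancel₀ _ hs's'.ne']
  refine ⟨t + k • s', W.add_mem htW (W.smul_mem _ hs'W), fun h0 => ?_, ?_⟩
  · have : lorentz (t + k • s') t = lorentz t t := by
      rw [lorentz_add_left, lorentz_smul_left, hs't, mul_zero, add_zero]
    rw [h0, lorentz_zero_left] at this
    exact ht.ne this.symm
  · simp only [lorentz_add_left, lorentz_add_right, lorentz_smul_left, lorentz_smul_right,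
      lorentz_comm t s', hs't]
    linear_combination hk

theorem IsSpacelikeSub.anisotropic {V : Submodule ℝ (Fin (N + 1) → ℝ)} (hV : IsSpacelikeSub V) :
    ∀ x ∈ V, lorentzForm N x x = 0 → x = 0 := fun x hx hxx => by
  by_contra hx0
  exact (hV x hx hx0).ne' hxx

/-- Decompose the time axis `e₀ = p + q` along `V ⊕ V^⊥`: as `⟨p,p⟩ ≥ 0`, `⟨q,q⟩ ≤ -1`. -/
theorem IsSpacelikeSub.exists_timelike_mem_orthogonal {V : Submodule ℝ (Fin (N + 1) → ℝ)}
    (hV : IsSpacelikeSub V) : ∃ q ∈ (lorentzForm N).orthogonal V, lorentz q q < 0 := by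
  obtain ⟨p, hp, q, hq, hpq⟩ := Submodule.mem_sup.mp <|
    (isCompl_orthogonal_of_anisotropic lorentzForm_isSymm.isRefl hV.anisotropic).sup_eq_top ▸
      Submodule.mem_top (x := Pi.single (Fin.last N) (1 : ℝ))
  have hpq' : lorentz p q = 0 := hq p hp
  have hlast : lorentz (p + q) (p + q) = -1 := by simp [hpq, lorentz_single_last]
  have hpp : 0 ≤ lorentz p p := by
    rcases eq_or_ne p 0 with rfl | hp0
    · simp [lorentz_zero_left]
    · exact (hV p hp hp0).le
  refine ⟨q, hq, ?_⟩
  rw [lorentz_add_left, lorentz_add_right, lorentz_add_right, hpq', lorentz_comm q p, hpq'] at hlast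
  linarith

theorem IsTimelikeSub.lorentz_self_pos_of_mem_orthogonal {V : Submodule ℝ (Fin (N + 1) → ℝ)}
    (hV : IsTimelikeSub V) {u : Fin (N + 1) → ℝ} (hu : u ∈ (lorentzForm N).orthogonal V)
    (hu0 : u ≠ 0) : 0 < lorentz u u := by
  obtain ⟨t, htV, ht⟩ := hV
  exact lorentz_self_pos_of_orthogonal_timelike ht ((lorentz_comm _ _).trans (hu t htV)) hu0

theorem IsSpacelikeSub.eq_zero_of_mem_orthogonal {V : Submodule ℝ (Fin (N + 1) → ℝ)}
    (hV : IsSpacelikeSub V) (hrank : finrank ℝ V = N) {u : Fin (N + 1) → ℝ}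
    (hu : u ∈ (lorentzForm N).orthogonal V) (huu : lorentz u u = 0) : u = 0 :=
  eq_zero_of_mem_orthogonal_of_finrank_add_one lorentzForm_nondegenerate
    lorentzForm_isSymm.isRefl hV.anisotropic (by simp [hrank]) hu huu

theorem IsSpacelikeSub.exists_null_mem_orthogonal {V : Submodule ℝ (Fin (N + 1) → ℝ)}
    (hV : IsSpacelikeSub V) (hrank : finrank ℝ V ≠ N) :
    ∃ u, u ≠ 0 ∧ lorentz u u = 0 ∧ u ∈ (lorentzForm N).orthogonal V := by
  obtain ⟨q, hq, hqq⟩ := hV.exists_timelike_mem_orthogonal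
  have hpos : 1 ≤ finrank ℝ ((lorentzForm N).orthogonal V) :=
    Submodule.one_le_finrank_iff.mpr <| (Submodule.ne_bot_iff _).mpr
      ⟨q, hq, by rintro rfl; simp [lorentz_zero_left] at hqq⟩
  rw [finrank_orthogonal lorentzForm_nondegenerate, finrank_fin_fun] at hpos
  obtain ⟨u, huW, hu0, huu⟩ :=
    exists_null_of_timelike_of_two_le_finrank (W := (lorentzForm N).orthogonal V)
      (by rw [finrank_orthogonal lorentzForm_nondegenerate, finrank_fin_fun]; omega) hq hqq
  exact ⟨u, hu0, huu, huW⟩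

theorem exists_null_mem_orthogonal_of_not_isTimelikeSub {V : Submodule ℝ (Fin (N + 1) → ℝ)}
    (hT : ¬IsTimelikeSub V) (hS : finrank ℝ V = N → ¬IsSpacelikeSub V) :
    ∃ u, u ≠ 0 ∧ lorentz u u = 0 ∧ u ∈ (lorentzForm N).orthogonal V := by
  have hnonneg : ∀ x ∈ V, 0 ≤ lorentz x x := fun x hx => not_lt.mp fun h => hT ⟨x, hx, h⟩
  by_cases hV : IsSpacelikeSub V
  · exact hV.exists_null_mem_orthogonal fun hrank => hS hrank hV
  · obtain ⟨x, hxV, hx0, hxx⟩ : ∃ x ∈ V, x ≠ 0 ∧ lorentz x x ≤ 0 := by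
      simpa [IsSpacelikeSub] using hV
    have hxx : lorentz x x = 0 := le_antisymm hxx (hnonneg x hxV)
    exact ⟨x, hx0, hxx, mem_orthogonal_of_nonneg_of_apply_self_eq_zero lorentzForm_isSymm
      hnonneg hxV hxx⟩

end Lorentz

theorem stmt_12_general {N : ℕ} {A : Type*} (v : A → Fin (N + 1) → ℝ) :
    (¬ ∃ u : Fin (N + 1) → ℝ, u ≠ 0 ∧ lorentz u u = 0 ∧ ∀ α : A, lorentz u (v α) = 0) ↔
    (IsTimelikeSub (Submodule.span ℝ (Set.range v)) ∨
      (Module.finrank ℝ (Submodule.span ℝ (Set.range v)) = N ∧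
        IsSpacelikeSub (Submodule.span ℝ (Set.range v)))) := by
  simp_rw [← mem_orthogonal_span_range_iff v]
  refine ⟨fun h => ?_, ?_⟩
  · by_contra! hTS
    exact h (exists_null_mem_orthogonal_of_not_isTimelikeSub hTS.1 hTS.2)
  · rintro (hT | ⟨hrank, hS⟩) ⟨u, hu0, huu, hu⟩
    · exact (hT.lorentz_self_pos_of_mem_orthogonal hu hu0).ne' huu
    · exact hu0 (hS.eq_zero_of_mem_orthogonal hrank hu huu)

/-- Let half-spaces of the hyperboloid H^N be given by space-like unit normals v_α; a
common point of the ideal boundary spheres ∂B_α corresponds to a non-zero light-like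
vector orthogonal to every v_α.  The boundary spheres have empty common intersection
if and only if the span of the v_α is time-like, or N-dimensional and space-like. -/
theorem stmt_12 {N : ℕ} {A : Type*} (v : A → Fin (N + 1) → ℝ)
    (hv : ∀ α : A, lorentz (v α) (v α) = 1) :
    (¬ ∃ u : Fin (N + 1) → ℝ, u ≠ 0 ∧ lorentz u u = 0 ∧ ∀ α : A, lorentz u (v α) = 0) ↔
    (IsTimelikeSub (Submodule.span ℝ (Set.range v)) ∨
      (Module.finrank ℝ (Submodule.span ℝ (Set.range v)) = N ∧
        IsSpacelikeSub (Submodule.span ℝ (Set.range v)))) :=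
  stmt_12_general v
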